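/- arXiv:1708.06451 — 10 statements merged into one kernel-verified Lean document; each statement's English description precedes it below -/
import Mathlib

section
/- Let λ, m, r, u, v, k be positive real numbers with kλr < muv (i.e., R₀ < 1), and let τ ≥ 0. Then for every real number w, the complex number y = wi is not a root of the equation (u + y)(v + y) − (kλr/m)e^{−τy} = 0; that is, the characteristic factor at the infection-free equilibrium has no pure imaginary roots. -/
open Complex

/-! On the imaginary axis `|e^{-τ y}| = 1`, while `|(u + y)(v + y)| ≥ |u| |v|`; a root would force
`|u| |v| ≤ kλr/m`, which `R₀ < 1` excludes. -/

theorem abs_re_mul_abs_re_le_norm_mul (z z' : ℂ) : |z.re| * |z'.re| ≤ ‖z * z'‖ := by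
  rw [norm_mul]
  exact mul_le_mul (abs_re_le_norm z) (abs_re_le_norm z') (abs_nonneg _) (norm_nonneg _)

theorem mul_sub_ofReal_mul_exp_ne_zero {z z' : ℂ} {c : ℝ} (hc : |c| < |z.re| * |z'.re|) (θ : ℝ) :
    z * z' - c * exp (θ * I) ≠ 0 := by
  intro h
  have hnorm : ‖z * z'‖ = |c| := by
    rw [sub_eq_zero.mp h, norm_mul, norm_exp_ofReal_mul_I, norm_real, Real.norm_eq_abs, mul_one]
  linarith [abs_re_mul_abs_re_le_norm_mul z z']

theorem no_pure_imaginary_roots_E0_general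
    (lam m r u v k τ : ℝ)
    (hlam : 0 < lam) (hm : 0 < m) (hr : 0 < r)
    (hk : 0 < k)
    (hR0 : k * lam * r < m * u * v) :
    ∀ w : ℝ,
      ((u : ℂ) + w * Complex.I) * ((v : ℂ) + w * Complex.I)
        - ((k * lam * r / m : ℝ) : ℂ) * Complex.exp (-(τ : ℂ) * (w * Complex.I)) ≠ 0 := by
  intro w
  have hc : |k * lam * r / m| < |u| * |v| := by
    have hc_lt : k * lam * r / m < u * v := by
      rw [div_lt_iff₀ hm]
      linarith
    rw [abs_of_nonneg (by positivity), ← abs_mul]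
    exact hc_lt.trans_le (le_abs_self _)
  have hexp : -(τ : ℂ) * (w * I) = ((-τ * w : ℝ) : ℂ) * I := by
    push_cast
    ring
  rw [hexp]
  exact mul_sub_ofReal_mul_exp_ne_zero (by simpa using hc) _

/-- If `R₀ < 1` and `τ ≥ 0`, the characteristic factor
`(u+y)(v+y) − (kλr/m)e^{−τy}` at the infection-free equilibrium has
no pure imaginary roots `y = wi`. -/
theorem no_pure_imaginary_roots_E0
    (lam m r u v k τ : ℝ)
    (hlam : 0 < lam) (hm : 0 < m) (hr : 0 < r) (hu : 0 < u)
    (hv : 0 < v) (hk : 0 < k)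
    (hR0 : k * lam * r < m * u * v) (hτ : 0 ≤ τ) :
    ∀ w : ℝ,
      ((u : ℂ) + w * Complex.I) * ((v : ℂ) + w * Complex.I)
        - ((k * lam * r / m : ℝ) : ℂ) * Complex.exp (-(τ : ℂ) * (w * Complex.I)) ≠ 0 :=
  no_pure_imaginary_roots_E0_general lam m r u v k τ hlam hm hr hk hR0
end

section
/- Let λ, m, r, u, v, k be positive real numbers with kλr < muv (i.e., R₀ < 1), and let τ ≥ 0. Then every complex root y of the equation (u + y)(v + y) = (kλr/m)e^{−τy} has strictly negative real part. -/
open Complex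

/-! If `Re y ≥ 0` then `‖a + y‖ ≥ a`, `‖b + y‖ ≥ b` and `‖exp (-τ y)‖ ≤ 1`, so the left-hand side
has modulus at least `ab`, while the right-hand side has modulus at most `‖c‖ < ab`. -/

lemma le_norm_ofReal_add {y : ℂ} (hy : 0 ≤ y.re) (a : ℝ) : a ≤ ‖(a : ℂ) + y‖ :=
  calc a ≤ ((a : ℂ) + y).re := by simpa using hy
    _ ≤ ‖(a : ℂ) + y‖ := re_le_norm _

lemma norm_exp_neg_mul_le_one {τ : ℝ} (hτ : 0 ≤ τ) {y : ℂ} (hy : 0 ≤ y.re) :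
    ‖exp (-(τ : ℂ) * y)‖ ≤ 1 := by
  rw [norm_exp, Real.exp_le_one_iff]
  simpa using mul_nonneg hτ hy

theorem re_neg_of_mul_eq_mul_exp_neg {a b τ : ℝ} {c y : ℂ} (hb : 0 ≤ b) (hc : ‖c‖ < a * b)
    (hτ : 0 ≤ τ) (hy : ((a : ℂ) + y) * ((b : ℂ) + y) = c * exp (-(τ : ℂ) * y)) :
    y.re < 0 := by
  by_contra! hre
  have hlhs : a * b ≤ ‖((a : ℂ) + y) * ((b : ℂ) + y)‖ := by
    rw [norm_mul]
    exact mul_le_mul (le_norm_ofReal_add hre a) (le_norm_ofReal_add hre b) hb (norm_nonneg _)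
  have hrhs : ‖c * exp (-(τ : ℂ) * y)‖ ≤ ‖c‖ := by
    rw [norm_mul]
    exact mul_le_of_le_one_right (norm_nonneg c) (norm_exp_neg_mul_le_one hτ hre)
  rw [hy] at hlhs
  linarith

theorem roots_neg_re_E0_general
    (lam m r u v k τ : ℝ)
    (hlam : 0 < lam) (hm : 0 < m) (hr : 0 < r)
    (hv : 0 < v) (hk : 0 < k)
    (hR0 : k * lam * r < m * u * v) (hτ : 0 ≤ τ) :
    ∀ y : ℂ,
      ((u : ℂ) + y) * ((v : ℂ) + y)
        = ((k * lam * r / m : ℝ) : ℂ) * Complex.exp (-(τ : ℂ) * y) →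
      y.re < 0 := by
  intro y hy
  have hc : ‖((k * lam * r / m : ℝ) : ℂ)‖ < u * v := by
    rw [norm_real, Real.norm_of_nonneg (by positivity), div_lt_iff₀ hm]
    linarith
  exact re_neg_of_mul_eq_mul_exp_neg hv.le hc hτ hy

/-- If `R₀ < 1` and `τ ≥ 0`, every complex root of
`(u+y)(v+y) = (kλr/m)e^{−τy}` has strictly negative real part. -/
theorem roots_neg_re_E0
    (lam m r u v k τ : ℝ)
    (hlam : 0 < lam) (hm : 0 < m) (hr : 0 < r) (hu : 0 < u)
    (hv : 0 < v) (hk : 0 < k)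
    (hR0 : k * lam * r < m * u * v) (hτ : 0 ≤ τ) :
    ∀ y : ℂ,
      ((u : ℂ) + y) * ((v : ℂ) + y)
        = ((k * lam * r / m : ℝ) : ℂ) * Complex.exp (-(τ : ℂ) * y) →
      y.re < 0 :=
  roots_neg_re_E0_general lam m r u v k τ hlam hm hr hv hk hR0 hτ
end

section
/- Let λ, m, r, u, v, k be positive real numbers with kλr > muv (i.e., R₀ > 1), and let τ ≥ 0. Then there exists a real number y > 0 such that (u + y)(v + y) = (kλr/m)e^{−τy}; that is, the characteristic equation at the infection-free equilibrium has a positive real root, so E₀ is unstable. -/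
/-- If `R₀ > 1` and `τ ≥ 0`, the characteristic equation at the infection-free
equilibrium has a positive real root, so `E₀` is unstable. -/
theorem positive_real_root_E0
    (lam m r u v k τ : ℝ)
    (hlam : 0 < lam) (hm : 0 < m) (hr : 0 < r) (hu : 0 < u)
    (hv : 0 < v) (hk : 0 < k)
    (hR0 : k * lam * r > m * u * v) (hτ : 0 ≤ τ) :
    ∃ y : ℝ, 0 < y ∧ (u + y) * (v + y) = (k * lam * r / m) * Real.exp (-τ * y) := by
  set C : ℝ := k * lam * r / m with hC
  have hCpos : 0 < C := by positivity
  have hCgt : u * v < C := by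
    rw [hC, lt_div_iff₀ hm]
    nlinarith
  set f : ℝ → ℝ := fun y => (u + y) * (v + y) - C * Real.exp (-τ * y) with hf
  have hcont : Continuous f := by
    apply Continuous.sub
    · continuity
    · exact continuous_const.mul ((continuous_const.mul continuous_id).rexp)
  set Y : ℝ := max 1 C with hY
  have hY1 : 1 ≤ Y := le_max_left _ _
  have hYC : C ≤ Y := le_max_right _ _
  have hYpos : 0 < Y := lt_of_lt_of_le one_pos hY1
  have hf0 : f 0 < 0 := by
    simp only [hf]
    have : Real.exp (-τ * 0) = 1 := by norm_num
    rw [this]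
    nlinarith
  have hfY : 0 < f Y := by
    have hexp : Real.exp (-τ * Y) ≤ 1 := by
      apply Real.exp_le_one_iff.mpr
      nlinarith
    have hCY : C * Real.exp (-τ * Y) ≤ C := by nlinarith [Real.exp_pos (-τ * Y)]
    have hYY : Y ≤ Y * Y := by nlinarith
    simp only [hf]
    nlinarith
  have hsub : Set.Ioo (f 0) (f Y) ⊆ f '' Set.Ioo 0 Y :=
    intermediate_value_Ioo (le_of_lt hYpos) hcont.continuousOn
  have h0mem : (0 : ℝ) ∈ Set.Ioo (f 0) (f Y) := ⟨hf0, hfY⟩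
  obtain ⟨y, hymem, hyval⟩ := hsub h0mem
  refine ⟨y, hymem.1, ?_⟩
  have : (u + y) * (v + y) - C * Real.exp (-τ * y) = 0 := hyval
  linarith
end

section
/- Let u, v be positive real numbers, let a ≥ 0 and b be real numbers with (a, b) ≠ (0, 0). Then (a² − b² + (u+v)a + uv)² + (2ab + (u+v)b)² > u²v². -/
/-- For positive `u, v`, `a ≥ 0` and `(a, b) ≠ (0, 0)`:
`(a² − b² + (u+v)a + uv)² + (2ab + (u+v)b)² > u²v²`. -/
theorem sum_of_squares_estimate
    (u v a b : ℝ) (hu : 0 < u) (hv : 0 < v) (ha : 0 ≤ a)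
    (hab : (a, b) ≠ (0, 0)) :
    (a ^ 2 - b ^ 2 + (u + v) * a + u * v) ^ 2 + (2 * a * b + (u + v) * b) ^ 2
      > u ^ 2 * v ^ 2 := by
  have key : (a ^ 2 - b ^ 2 + (u + v) * a + u * v) ^ 2 + (2 * a * b + (u + v) * b) ^ 2
      = ((a + u) ^ 2 + b ^ 2) * ((a + v) ^ 2 + b ^ 2) := by ring
  rw [key]
  have h1 : u ^ 2 ≤ (a + u) ^ 2 + b ^ 2 := by nlinarith [sq_nonneg b]
  have h2 : v ^ 2 ≤ (a + v) ^ 2 + b ^ 2 := by nlinarith [sq_nonneg b]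
  rcases (show 0 < a ∨ b ≠ 0 by
      by_contra h
      push_neg at h
      exact hab (by simp [le_antisymm h.1 ha, h.2])) with h | h
  · have h1' : u ^ 2 < (a + u) ^ 2 + b ^ 2 := by nlinarith [sq_nonneg b]
    nlinarith [sq_nonneg v, pow_pos hv 2]
  · have hb : 0 < b ^ 2 := by positivity
    have h1' : u ^ 2 < (a + u) ^ 2 + b ^ 2 := by nlinarith
    nlinarith [pow_pos hv 2]
end

section
/- Let λ, m, r, u, v, k be positive real numbers with muv = kλr (i.e., R₀ = 1), and let τ ≥ 0. If y = a + bi is a complex number with a ≥ 0 and y ≠ 0, then y² + (u+v)y + uv − uv·e^{−τy} ≠ 0. Consequently, y = 0 is the unique root with nonnegative real part of the equation y² + (u+v)y + uv − uv·e^{−τy} = 0. -/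
open Complex

/-!
Write the characteristic function as `(y + u)(y + v) − uv·e^{−τy}`. For `Re y ≥ 0` and `y ≠ 0`,
each factor `y + u`, `y + v` is strictly longer than `u`, resp. `v`, so `|(y + u)(y + v)| > uv`,
whereas `|uv·e^{−τy}| = uv·e^{−τ Re y} ≤ uv`.
-/

namespace Complex

theorem lt_norm_add_ofReal {y : ℂ} (hre : 0 ≤ y.re) (hy : y ≠ 0) {w : ℝ} (hw : 0 ≤ w) :
    w < ‖y + w‖ := by
  have hnormSq : 0 < y.re * y.re + y.im * y.im := by
    simpa only [normSq_apply] using normSq_pos.mpr hy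
  have hsq : w ^ 2 < ‖y + w‖ ^ 2 := by
    rw [Complex.sq_norm, normSq_apply, add_re, add_im, ofReal_re, ofReal_im, add_zero]
    nlinarith
  exact lt_of_pow_lt_pow_left₀ 2 (norm_nonneg _) hsq

theorem norm_exp_neg_mul_le_one {τ : ℝ} (hτ : 0 ≤ τ) {y : ℂ} (hre : 0 ≤ y.re) :
    ‖exp (-(τ : ℂ) * y)‖ ≤ 1 := by
  rw [norm_exp, Real.exp_le_one_iff, neg_mul, neg_re, re_ofReal_mul, neg_nonpos]
  exact mul_nonneg hτ hre

theorem mul_lt_norm_add_ofReal_mul_add_ofReal {y : ℂ} (hre : 0 ≤ y.re) (hy : y ≠ 0)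
    {u v : ℝ} (hu : 0 ≤ u) (hv : 0 ≤ v) : u * v < ‖(y + u) * (y + v)‖ := by
  rw [norm_mul]
  exact mul_lt_mul'' (lt_norm_add_ofReal hre hy hu) (lt_norm_add_ofReal hre hy hv) hu hv

theorem mul_add_ofReal_ne_mul_exp {y : ℂ} (hre : 0 ≤ y.re) (hy : y ≠ 0)
    {u v τ : ℝ} (hu : 0 ≤ u) (hv : 0 ≤ v) (hτ : 0 ≤ τ) :
    (y + u) * (y + v) ≠ ((u * v : ℝ) : ℂ) * exp (-(τ : ℂ) * y) := by
  intro h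
  have hle : ‖(y + u) * (y + v)‖ ≤ u * v := by
    rw [h, norm_mul, norm_real, Real.norm_of_nonneg (mul_nonneg hu hv)]
    exact mul_le_of_le_one_right (mul_nonneg hu hv) (norm_exp_neg_mul_le_one hτ hre)
  exact (mul_lt_norm_add_ofReal_mul_add_ofReal hre hy hu hv).not_ge hle

end Complex

theorem critical_case_unique_root_general
    (u v τ : ℝ)
    (hu : 0 < u)
    (hv : 0 < v) (hτ : 0 ≤ τ) :
    (∀ y : ℂ, 0 ≤ y.re → y ≠ 0 →
      y ^ 2 + ((u : ℂ) + v) * y + ((u * v : ℝ) : ℂ)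
        - ((u * v : ℝ) : ℂ) * Complex.exp (-(τ : ℂ) * y) ≠ 0) ∧
    (∀ y : ℂ, 0 ≤ y.re →
      (y ^ 2 + ((u : ℂ) + v) * y + ((u * v : ℝ) : ℂ)
        - ((u * v : ℝ) : ℂ) * Complex.exp (-(τ : ℂ) * y) = 0 ↔ y = 0)) := by
  have hroot : ∀ y : ℂ, 0 ≤ y.re → y ≠ 0 →
      y ^ 2 + ((u : ℂ) + v) * y + ((u * v : ℝ) : ℂ)
        - ((u * v : ℝ) : ℂ) * Complex.exp (-(τ : ℂ) * y) ≠ 0 := by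
    intro y hre hy
    have hfactor : y ^ 2 + ((u : ℂ) + v) * y + ((u * v : ℝ) : ℂ)
        - ((u * v : ℝ) : ℂ) * Complex.exp (-(τ : ℂ) * y)
        = (y + u) * (y + v) - ((u * v : ℝ) : ℂ) * Complex.exp (-(τ : ℂ) * y) := by
      push_cast
      ring
    rw [hfactor, sub_ne_zero]
    exact mul_add_ofReal_ne_mul_exp hre hy hu.le hv.le hτ
  exact ⟨hroot, fun y hre =>
    ⟨fun h => by_contra fun hy => hroot y hre hy h, fun h => by simp [h]⟩⟩

/-- In the critical case `R₀ = 1`: any `y` with nonnegative real part and `y ≠ 0`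
is not a root of `y² + (u+v)y + uv − uv·e^{−τy}`; consequently `y = 0` is the unique
root with nonnegative real part. -/
theorem critical_case_unique_root
    (lam m r u v k τ : ℝ)
    (hlam : 0 < lam) (hm : 0 < m) (hr : 0 < r) (hu : 0 < u)
    (hv : 0 < v) (hk : 0 < k)
    (hR0 : m * u * v = k * lam * r) (hτ : 0 ≤ τ) :
    (∀ y : ℂ, 0 ≤ y.re → y ≠ 0 →
      y ^ 2 + ((u : ℂ) + v) * y + ((u * v : ℝ) : ℂ)
        - ((u * v : ℝ) : ℂ) * Complex.exp (-(τ : ℂ) * y) ≠ 0) ∧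
    (∀ y : ℂ, 0 ≤ y.re →
      (y ^ 2 + ((u : ℂ) + v) * y + ((u * v : ℝ) : ℂ)
        - ((u * v : ℝ) : ℂ) * Complex.exp (-(τ : ℂ) * y) = 0 ↔ y = 0)) :=
  critical_case_unique_root_general u v τ hu hv hτ
end

section
/- Let λ, m, r, u, v, k be positive real numbers with kλr > muv, and set V̄ = (kλr − muv)/(vru) > 0. Then every complex root of the cubic polynomial y³ + Ay² + (B − D)y + (C − E), where A = m + u + v + V̄r, B − D = V̄ru + V̄rv + mu + mv, C − E = V̄ruv, has strictly negative real part. -/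
/-- Routh–Hurwitz for a cubic with positive coefficients and `C < A*B`. -/
lemma routh_cubic (A B C : ℝ) (hA : 0 < A) (hB : 0 < B) (hC : 0 < C)
    (hABC : C < A * B) :
    ∀ y : ℂ, y ^ 3 + (A : ℂ) * y ^ 2 + (B : ℂ) * y + (C : ℂ) = 0 → y.re < 0 := by
  intro y h
  by_contra hs
  push_neg at hs
  set s := y.re with hsdef
  set t := y.im with htdef
  have hre : s ^ 3 - 3 * s * t ^ 2 + A * (s ^ 2 - t ^ 2) + B * s + C = 0 := by
    have := congrArg Complex.re h
    simp [Complex.add_re, Complex.mul_re, Complex.mul_im, pow_succ, pow_zero,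
      Complex.ofReal_re, Complex.ofReal_im, Complex.one_re, Complex.one_im] at this
    ring_nf at this ⊢
    linarith
  have him : t * (3 * s ^ 2 - t ^ 2 + 2 * A * s + B) = 0 := by
    have := congrArg Complex.im h
    simp [Complex.add_im, Complex.mul_re, Complex.mul_im, pow_succ, pow_zero,
      Complex.ofReal_re, Complex.ofReal_im, Complex.one_re, Complex.one_im] at this
    ring_nf at this ⊢
    linarith
  rcases mul_eq_zero.mp him with ht | ht
  · rw [ht] at hre
    nlinarith [sq_nonneg s, mul_nonneg hs hs, mul_nonneg (mul_nonneg hs hs) hs,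
      mul_nonneg hA.le (mul_nonneg hs hs), mul_nonneg hB.le hs]
  · have ht2 : t ^ 2 = 3 * s ^ 2 + 2 * A * s + B := by linarith
    rw [ht2] at hre
    nlinarith [mul_nonneg (mul_nonneg hs hs) hs, mul_nonneg hA.le (mul_nonneg hs hs),
      mul_nonneg hB.le hs, mul_nonneg (mul_nonneg hA.le hA.le) hs, hA, hB, hC]

/-- Every complex root of the cubic `y³ + Ay² + (B−D)y + (C−E)` at the
CTL-inactivated equilibrium (with `τ = 0`) has strictly negative real part. -/
theorem cubic_roots_neg_re_E1
    (lam m r u v k : ℝ)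
    (hlam : 0 < lam) (hm : 0 < m) (hr : 0 < r) (hu : 0 < u)
    (hv : 0 < v) (hk : 0 < k)
    (hR0 : k * lam * r > m * u * v)
    (Vbar : ℝ) (hV : Vbar = (k * lam * r - m * u * v) / (v * r * u)) :
    ∀ y : ℂ,
      y ^ 3 + ((m + u + v + Vbar * r : ℝ) : ℂ) * y ^ 2
        + ((Vbar * r * u + Vbar * r * v + m * u + m * v : ℝ) : ℂ) * y
        + ((Vbar * r * u * v : ℝ) : ℂ) = 0 →
      y.re < 0 := by
  have hVpos : 0 < Vbar := by
    rw [hV]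
    exact div_pos (by linarith) (by positivity)
  have hA : 0 < m + u + v + Vbar * r := by positivity
  have hB : 0 < Vbar * r * u + Vbar * r * v + m * u + m * v := by positivity
  have hC : 0 < Vbar * r * u * v := by positivity
  have h1 : Vbar * r * u * v < u * (Vbar * r * u + Vbar * r * v + m * u + m * v) := by
    nlinarith [mul_pos hu (mul_pos (mul_pos hVpos hr) hu),
      mul_pos hu (mul_pos hm hu), mul_pos hu (mul_pos hm hv)]
  have hABC : Vbar * r * u * v <
      (m + u + v + Vbar * r) * (Vbar * r * u + Vbar * r * v + m * u + m * v) := by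
    have h2 : 0 < (m + v + Vbar * r) * (Vbar * r * u + Vbar * r * v + m * u + m * v) :=
      mul_pos (by positivity) hB
    nlinarith [h1, h2]
  exact routh_cubic _ _ _ hA hB hC hABC
end

section
/- Let m, r, u, v be positive real numbers and V̄ > 0, and set A = m + u + v + V̄r, B = V̄ru + V̄rv + mu + mv + uv, C = muv + V̄ruv, D = uv, E = muv. Then the three inequalities hold: A² − 2B > 0, B² − 2AC − D² > 0, and C² − E² > 0. Consequently, for every real number w, w⁶ + (A² − 2B)w⁴ + (B² − 2AC − D²)w² + (C² − E²) > 0. -/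
/-- Positivity of the coefficients of the sextic obtained from the squared
modulus of the characteristic factor at `E₁`, and positivity of the sextic. -/
theorem sextic_positive_E1
    (m r u v Vbar : ℝ)
    (hm : 0 < m) (hr : 0 < r) (hu : 0 < u) (hv : 0 < v) (hV : 0 < Vbar)
    (A B C D E : ℝ)
    (hA : A = m + u + v + Vbar * r)
    (hB : B = Vbar * r * u + Vbar * r * v + m * u + m * v + u * v)
    (hC : C = m * u * v + Vbar * r * u * v)
    (hD : D = u * v)
    (hE : E = m * u * v) :
    A ^ 2 - 2 * B > 0 ∧ B ^ 2 - 2 * A * C - D ^ 2 > 0 ∧ C ^ 2 - E ^ 2 > 0 ∧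
    ∀ w : ℝ,
      w ^ 6 + (A ^ 2 - 2 * B) * w ^ 4 + (B ^ 2 - 2 * A * C - D ^ 2) * w ^ 2
        + (C ^ 2 - E ^ 2) > 0 := by
  subst hA hB hC hD hE
  have h1 : (m + u + v + Vbar * r) ^ 2 -
      2 * (Vbar * r * u + Vbar * r * v + m * u + m * v + u * v) > 0 := by
    nlinarith [sq_nonneg m, sq_nonneg u, sq_nonneg v, sq_nonneg (Vbar*r),
      mul_pos hm hu, mul_pos (mul_pos hV hr) hm, sq_nonneg (m+u), sq_nonneg (v + Vbar*r)]
  have h2 : (Vbar * r * u + Vbar * r * v + m * u + m * v + u * v) ^ 2 -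
      2 * (m + u + v + Vbar * r) * (m * u * v + Vbar * r * u * v) - (u * v) ^ 2 > 0 := by
    nlinarith [sq_nonneg (Vbar*r*u - m*v), sq_nonneg (Vbar*r*v - m*u),
      sq_nonneg (Vbar*r*u + Vbar*r*v), sq_nonneg (m*u + m*v),
      mul_pos (mul_pos hm hu) (mul_pos hv (mul_pos hV hr)),
      mul_pos (mul_pos hu hv) (mul_pos hu hv),
      sq_nonneg (m*u - u*v), sq_nonneg (m*v - u*v), sq_nonneg (Vbar*r*u - u*v),
      sq_nonneg (Vbar*r*v - u*v), mul_pos hm hu, mul_pos hm hv,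
      mul_pos (mul_pos hV hr) hu, mul_pos (mul_pos hV hr) hv]
  have h3 : (m * u * v + Vbar * r * u * v) ^ 2 - (m * u * v) ^ 2 > 0 := by
    nlinarith [mul_pos (mul_pos hm hu) hv, mul_pos (mul_pos (mul_pos hV hr) hu) hv,
      sq_nonneg (Vbar*r*u*v)]
  refine ⟨h1, h2, h3, fun w => ?_⟩
  have h4 : w ^ 6 ≥ 0 := by positivity
  have h5 : w ^ 4 ≥ 0 := by positivity
  have h6 : w ^ 2 ≥ 0 := by positivity
  nlinarith [mul_nonneg h5 h1.le, mul_nonneg h6 h2.le]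
end

section
/- Let λ, m, r, u, v, k be positive real numbers with kλr > muv, set V̄ = (kλr − muv)/(vru) > 0, A = m + u + v + V̄r, B = V̄ru + V̄rv + mu + mv + uv, C = muv + V̄ruv, D = uv, E = muv, and let τ ≥ 0. Then for every real number w, the complex number y = wi is not a root of y³ + Ay² + By + C − (Dy + E)e^{−τy} = 0; that is, this characteristic factor has no pure imaginary roots. -/
open Complex

/-- For any delay `τ ≥ 0`, the characteristic factor
`y³ + Ay² + By + C − (Dy + E)e^{−τy}` at `E₁` has no pure imaginary roots. -/
theorem no_pure_imaginary_roots_E1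
    (lam m r u v k τ : ℝ)
    (hlam : 0 < lam) (hm : 0 < m) (hr : 0 < r) (hu : 0 < u)
    (hv : 0 < v) (hk : 0 < k)
    (hR0 : k * lam * r > m * u * v) (hτ : 0 ≤ τ)
    (Vbar A B C D E : ℝ)
    (hV : Vbar = (k * lam * r - m * u * v) / (v * r * u))
    (hA : A = m + u + v + Vbar * r)
    (hB : B = Vbar * r * u + Vbar * r * v + m * u + m * v + u * v)
    (hC : C = m * u * v + Vbar * r * u * v)
    (hD : D = u * v)
    (hE : E = m * u * v) :
    ∀ w : ℝ,
      (w * Complex.I) ^ 3 + (A : ℂ) * (w * Complex.I) ^ 2 + (B : ℂ) * (w * Complex.I)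
        + (C : ℂ)
        - ((D : ℂ) * (w * Complex.I) + (E : ℂ)) * Complex.exp (-(τ : ℂ) * (w * Complex.I))
        ≠ 0 := by
  intro w heq
  -- positivity of Vbar
  have hVpos : 0 < Vbar := by
    rw [hV]
    apply div_pos (by linarith) (by positivity)
  have hs : 0 < Vbar * r := mul_pos hVpos hr
  -- rewrite the polynomial part in the form a + b * I
  have h3 : (Complex.I) ^ 3 = -Complex.I := by rw [pow_succ, Complex.I_sq]; ring
  have hz1 : ((w : ℂ) * Complex.I) ^ 3 + (A : ℂ) * ((w : ℂ) * Complex.I) ^ 2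
      + (B : ℂ) * ((w : ℂ) * Complex.I) + (C : ℂ)
      = ((C - A * w ^ 2 : ℝ) : ℂ) + ((B * w - w ^ 3 : ℝ) : ℂ) * Complex.I := by
    push_cast; ring_nf; rw [h3, Complex.I_sq]; ring
  have hz2 : (D : ℂ) * ((w : ℂ) * Complex.I) + (E : ℂ)
      = ((E : ℝ) : ℂ) + ((D * w : ℝ) : ℂ) * Complex.I := by
    push_cast; ring
  -- from the root equation
  have heq2 : ((C - A * w ^ 2 : ℝ) : ℂ) + ((B * w - w ^ 3 : ℝ) : ℂ) * Complex.I
      = (((E : ℝ) : ℂ) + ((D * w : ℝ) : ℂ) * Complex.I)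
        * Complex.exp (-(τ : ℂ) * (w * Complex.I)) := by
    rw [← hz1, ← hz2]
    have := sub_eq_zero.mpr (sub_eq_zero.mp heq)
    linear_combination heq
  -- take normSq of both sides
  have hexp : Complex.normSq (Complex.exp (-(τ : ℂ) * (w * Complex.I))) = 1 := by
    rw [Complex.normSq_eq_norm_sq, Complex.norm_exp]
    simp
  have hns := congrArg Complex.normSq heq2
  rw [Complex.normSq_mul, hexp, mul_one, Complex.normSq_add_mul_I,
    Complex.normSq_add_mul_I] at hns
  -- the real inequality contradicting hns
  have hident : (C - A * w ^ 2) ^ 2 + (B * w - w ^ 3) ^ 2 - (E ^ 2 + (D * w) ^ 2)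
      = (w ^ 2) ^ 3
        + (m ^ 2 + u ^ 2 + v ^ 2 + (Vbar * r) ^ 2 + 2 * m * (Vbar * r)) * (w ^ 2) ^ 2
        + (m + Vbar * r) ^ 2 * (u ^ 2 + v ^ 2) * w ^ 2
        + u ^ 2 * v ^ 2 * ((Vbar * r) ^ 2 + 2 * m * (Vbar * r)) := by
    subst hA hB hC hD hE; ring
  nlinarith [sq_nonneg w, sq_nonneg (w ^ 2), sq_nonneg (w ^ 3),
    mul_pos (mul_pos (mul_pos hu hu) (mul_pos hv hv))
      (add_pos (mul_pos hs hs) (mul_pos (mul_pos (by norm_num : (0:ℝ) < 2) hm) hs)),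
    mul_nonneg (mul_nonneg (sq_nonneg (m + Vbar * r))
      (by positivity : (0:ℝ) ≤ u ^ 2 + v ^ 2)) (sq_nonneg w),
    mul_nonneg (by positivity : (0:ℝ) ≤ m ^ 2 + u ^ 2 + v ^ 2 + (Vbar * r) ^ 2
      + 2 * m * (Vbar * r)) (sq_nonneg (w ^ 2))]
end

section
/- Let λ, m, r, u, v, k be positive real numbers with kλr > muv, set V̄ = (kλr − muv)/(vru), A = m + u + v + V̄r, B = V̄ru + V̄rv + mu + mv + uv, C = muv + V̄ruv, D = uv, E = muv, and let τ ≥ 0. Then every complex root y of the equation y³ + Ay² + By + C = (Dy + E)e^{−τy} has strictly negative real part. -/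
/-!
With `W = V̄ r > 0` the equation factors as `(y + u)(y + v)(y + m + W) = uv (y + m) e^{-τy}`.
If `Re y ≥ 0`, then `|y + u| ≥ u`, `|y + v| ≥ v`, `|y + m + W| > |y + m|` and `|e^{-τy}| ≤ 1`,
so the left side is strictly larger in modulus than the right side.
-/

open Complex

namespace Complex

theorem norm_exp_neg_ofReal_mul_le_one {τ : ℝ} (hτ : 0 ≤ τ) {y : ℂ} (hy : 0 ≤ y.re) :
    ‖exp (-τ * y)‖ ≤ 1 := by
  rw [norm_exp, Real.exp_le_one_iff]
  simpa using mul_nonneg hτ hy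

theorem le_norm_add_ofReal_of_re_nonneg {y : ℂ} (hy : 0 ≤ y.re) (a : ℝ) : a ≤ ‖y + a‖ :=
  calc a ≤ (y + a).re := by simpa using hy
    _ ≤ ‖y + a‖ := re_le_norm _

theorem norm_lt_norm_add_ofReal_of_re_nonneg {z : ℂ} (hz : 0 ≤ z.re) {w : ℝ} (hw : 0 < w) :
    ‖z‖ < ‖z + w‖ := by
  refine lt_of_pow_lt_pow_left₀ 2 (norm_nonneg _) ?_
  rw [Complex.sq_norm, Complex.sq_norm, normSq_apply, normSq_apply]
  simp only [add_re, add_im, ofReal_re, ofReal_im, add_zero]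
  nlinarith [mul_nonneg hz hw.le]

end Complex

theorem re_neg_of_factored_char_eq {u v m W τ : ℝ} (hu : 0 < u) (hv : 0 < v) (hm : 0 ≤ m)
    (hW : 0 < W) (hτ : 0 ≤ τ) {y : ℂ}
    (hy : (y + u) * (y + v) * (y + m + W) = u * v * (y + m) * exp (-τ * y)) :
    y.re < 0 := by
  by_contra! hre
  have hym : 0 ≤ (y + m).re := by simpa using add_nonneg hre hm
  have hexp := norm_exp_neg_ofReal_mul_le_one hτ hre
  have hlt := norm_lt_norm_add_ofReal_of_re_nonneg hym hW
  have huv : u * v ≤ ‖y + u‖ * ‖y + v‖ :=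
    mul_le_mul (le_norm_add_ofReal_of_re_nonneg hre u) (le_norm_add_ofReal_of_re_nonneg hre v)
      hv.le (norm_nonneg _)
  have hnorm := congrArg norm hy
  simp only [norm_mul, Complex.norm_of_nonneg hu.le, Complex.norm_of_nonneg hv.le] at hnorm
  have : u * v * ‖y + m‖ < u * v * ‖y + m‖ :=
    calc u * v * ‖y + m‖ < u * v * ‖y + m + W‖ := by gcongr
      _ ≤ ‖y + u‖ * ‖y + v‖ * ‖y + m + W‖ := by gcongr
      _ = u * v * ‖y + m‖ * ‖exp (-τ * y)‖ := hnorm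
      _ ≤ u * v * ‖y + m‖ := mul_le_of_le_one_right (by positivity) hexp
  exact this.false

theorem roots_neg_re_E1_general
    (lam m r u v k τ : ℝ)
    (hm : 0 < m) (hr : 0 < r) (hu : 0 < u)
    (hv : 0 < v)
    (hR0 : k * lam * r > m * u * v) (hτ : 0 ≤ τ)
    (Vbar A B C D E : ℝ)
    (hV : Vbar = (k * lam * r - m * u * v) / (v * r * u))
    (hA : A = m + u + v + Vbar * r)
    (hB : B = Vbar * r * u + Vbar * r * v + m * u + m * v + u * v)
    (hC : C = m * u * v + Vbar * r * u * v)
    (hD : D = u * v)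
    (hE : E = m * u * v) :
    ∀ y : ℂ,
      y ^ 3 + (A : ℂ) * y ^ 2 + (B : ℂ) * y + (C : ℂ)
        = ((D : ℂ) * y + (E : ℂ)) * Complex.exp (-(τ : ℂ) * y) →
      y.re < 0 := by
  intro y hy
  have hW : 0 < Vbar * r := by
    rw [hV]
    exact mul_pos (div_pos (sub_pos.mpr hR0) (by positivity)) hr
  refine re_neg_of_factored_char_eq hu hv hm.le hW hτ ?_
  subst hA hB hC hD hE
  push_cast at hy ⊢
  linear_combination hy

/-- For any delay `τ ≥ 0`, every complex root of
`y³ + Ay² + By + C = (Dy + E)e^{−τy}` has strictly negative real part. -/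
theorem roots_neg_re_E1
    (lam m r u v k τ : ℝ)
    (hlam : 0 < lam) (hm : 0 < m) (hr : 0 < r) (hu : 0 < u)
    (hv : 0 < v) (hk : 0 < k)
    (hR0 : k * lam * r > m * u * v) (hτ : 0 ≤ τ)
    (Vbar A B C D E : ℝ)
    (hV : Vbar = (k * lam * r - m * u * v) / (v * r * u))
    (hA : A = m + u + v + Vbar * r)
    (hB : B = Vbar * r * u + Vbar * r * v + m * u + m * v + u * v)
    (hC : C = m * u * v + Vbar * r * u * v)
    (hD : D = u * v)
    (hE : E = m * u * v) :
    ∀ y : ℂ,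
      y ^ 3 + (A : ℂ) * y ^ 2 + (B : ℂ) * y + (C : ℂ)
        = ((D : ℂ) * y + (E : ℂ)) * Complex.exp (-(τ : ℂ) * y) →
      y.re < 0 :=
  roots_neg_re_E1_general lam m r u v k τ hm hr hu hv hR0 hτ Vbar A B C D E hV hA hB hC hD hE
end

section
/- Let λ, m, r, u, s, k, v, a, n be positive real numbers with akλr > amuv + knru (i.e., R₀ > 1 + R₁), and set Z̄ = aλv/(amv + knr), V̄ = kn/(av), T̄ = (akλr − amuv − knru)/(amvs + knrs). Then for every τ ≥ 0 and every real number w, the complex number y = wi is not a solution of the characteristic equation (y + m + V̄r)(v + y)(T̄ns + y(u + y + T̄s)) = (y + m)·v·(Z̄kr/v)·y·e^{−τy}; that is, the characteristic equation at the CTL-activated infection equilibrium E₂ has no pure imaginary roots for any delay τ ≥ 0. -/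
/-!
On the imaginary axis `y = iw` the left-hand side beats the right-hand side in modulus factor by
factor: `|iw + m + V̄r| > |iw + m|`, `|v + iw| ≥ v`, and the cubic factor, which never vanishes,
has modulus at least its imaginary part `|w| (u + sT̄)`; at `E₂` this equals `|w| Z̄kr/v`, the
modulus of the remaining factors on the right since `|e^{-iτw}| = 1`.
-/

namespace Complex

theorem norm_lt_norm_add_ofReal {z : ℂ} (hz : 0 ≤ z.re) {c : ℝ} (hc : 0 < c) :
    ‖z‖ < ‖z + c‖ := by
  rw [← sq_lt_sq₀ (norm_nonneg _) (norm_nonneg _), Complex.sq_norm, Complex.sq_norm,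
    normSq_apply, normSq_apply]
  simp only [add_re, ofReal_re, add_im, ofReal_im, add_zero]
  nlinarith

theorem abs_mul_abs_le_norm_ofReal_add_mul_I_mul (p q w : ℝ) :
    |w| * |q| ≤ ‖(p : ℂ) + w * I * (q + w * I)‖ := by
  have him : ((p : ℂ) + w * I * (q + w * I)).im = w * q := by simp
  rw [← abs_mul, ← him]
  exact abs_im_le_norm _

theorem ofReal_add_mul_I_mul_ne_zero {p q : ℝ} (hp : 0 < p) (hq : 0 < q) (w : ℝ) :
    (p : ℂ) + w * I * (q + w * I) ≠ 0 := by
  intro h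
  have him : w * q = 0 := by simpa using congrArg im h
  obtain rfl : w = 0 := (mul_eq_zero.1 him).resolve_right hq.ne'
  simp [hp.ne'] at h

end Complex

open Complex

theorem mul_mul_ne_mul_mul_of_norm_lt {E : Type*} [NormedDivisionRing E]
    {x x' y y' z z' : E}
    (hx : ‖x'‖ < ‖x‖) (hy : ‖y'‖ ≤ ‖y‖) (hz : ‖z'‖ ≤ ‖z‖) (hy0 : y ≠ 0) (hz0 : z ≠ 0) :
    x * y * z ≠ x' * y' * z' := by
  have hyz : 0 < ‖y‖ * ‖z‖ := by positivity
  have hlt : ‖x' * y' * z'‖ < ‖x * y * z‖ :=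
    calc ‖x' * y' * z'‖
        = ‖x'‖ * (‖y'‖ * ‖z'‖) := by rw [norm_mul, norm_mul, mul_assoc]
      _ ≤ ‖x'‖ * (‖y‖ * ‖z‖) := by gcongr
      _ < ‖x‖ * (‖y‖ * ‖z‖) := by gcongr
      _ = ‖x * y * z‖ := by rw [norm_mul, norm_mul, mul_assoc]
  exact fun h ↦ hlt.ne (congrArg norm h).symm

/-- At `E₂` the infected-cell balance `r V̄ Z̄ = (u + s T̄) Ī` with `V̄ = k Ī / v` reads
`u + s T̄ = Z̄ k r / v`. -/
theorem E2_infected_cell_balance {lam m r u s k v a n : ℝ} (hs : s ≠ 0) (hv : v ≠ 0)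
    (hden : a * m * v + k * n * r ≠ 0) :
    u + (a * k * lam * r - a * m * u * v - k * n * r * u) / (a * m * v * s + k * n * r * s) * s
      = a * lam * v / (a * m * v + k * n * r) * k * r / v := by
  rw [show a * m * v * s + k * n * r * s = (a * m * v + k * n * r) * s by ring,
    ← div_div, div_mul_cancel₀ _ hs, add_div' _ _ _ hden, div_mul_eq_mul_div,
    div_mul_eq_mul_div, div_div, div_eq_div_iff hden (mul_ne_zero hden hv)]
  ring

theorem no_pure_imaginary_roots_E2_general
    (lam m r u s k v a n : ℝ)
    (hm : 0 < m) (hr : 0 < r) (hu : 0 < u) (hs : 0 < s)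
    (hk : 0 < k) (hv : 0 < v) (ha : 0 < a) (hn : 0 < n)
    (hR : a * k * lam * r > a * m * u * v + k * n * r * u)
    (Zbar Vbar Tbar : ℝ)
    (hZ : Zbar = a * lam * v / (a * m * v + k * n * r))
    (hV : Vbar = k * n / (a * v))
    (hT : Tbar = (a * k * lam * r - a * m * u * v - k * n * r * u)
                   / (a * m * v * s + k * n * r * s)) :
    ∀ τ : ℝ, 0 ≤ τ → ∀ w : ℝ,
      (w * Complex.I + (m : ℂ) + (Vbar : ℂ) * r) * ((v : ℂ) + w * Complex.I) *
          ((Tbar : ℂ) * n * s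
            + w * Complex.I * ((u : ℂ) + w * Complex.I + (Tbar : ℂ) * s))
        ≠ (w * Complex.I + (m : ℂ)) * (v : ℂ) * ((Zbar : ℂ) * k * r / v)
            * (w * Complex.I) * Complex.exp (-(τ : ℂ) * (w * Complex.I)) := by
  intro τ _ w
  have hT0 : 0 < Tbar := by
    rw [hT]; exact div_pos (by linarith) (by positivity)
  have hV0 : 0 < Vbar := by rw [hV]; positivity
  have hkey : u + Tbar * s = Zbar * k * r / v := by
    rw [hT, hZ]; exact E2_infected_cell_balance hs.ne' hv.ne' (by positivity)
  have hcubic : (Tbar : ℂ) * n * s + w * I * ((u : ℂ) + w * I + (Tbar : ℂ) * s)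
      = ((Tbar * n * s : ℝ) : ℂ) + w * I * (((u + Tbar * s : ℝ) : ℂ) + w * I) := by
    push_cast; ring
  have hexp : ‖exp (-(τ : ℂ) * (w * I))‖ = 1 := by
    rw [show -(τ : ℂ) * (w * I) = ((-τ * w : ℝ) : ℂ) * I by push_cast; ring]
    exact norm_exp_ofReal_mul_I _
  have hrhs : (w * I + (m : ℂ)) * (v : ℂ) * ((Zbar : ℂ) * k * r / v) * (w * I)
        * exp (-(τ : ℂ) * (w * I))
      = (w * I + (m : ℂ)) * (v : ℂ)
        * (((u + Tbar * s : ℝ) : ℂ) * (w * I) * exp (-(τ : ℂ) * (w * I))) := by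
    rw [hkey]; push_cast; ring
  rw [hcubic, hrhs]
  refine mul_mul_ne_mul_mul_of_norm_lt ?_ ?_ ?_ ?_
    (ofReal_add_mul_I_mul_ne_zero (by positivity) (by positivity) w)
  · rw [show w * I + (m : ℂ) + (Vbar : ℂ) * r = w * I + (m : ℂ) + ((Vbar * r : ℝ) : ℂ) by
      push_cast; ring]
    exact norm_lt_norm_add_ofReal (by simpa using hm.le) (by positivity)
  · simpa [abs_of_pos hv] using abs_re_le_norm ((v : ℂ) + w * I)
  · rw [norm_mul, hexp, mul_one, norm_mul, norm_mul, norm_I, mul_one,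
      norm_real, norm_real, Real.norm_eq_abs, Real.norm_eq_abs, mul_comm]
    exact abs_mul_abs_le_norm_ofReal_add_mul_I_mul _ _ _
  · exact fun h ↦ hv.ne' (by simpa using congrArg re h)

/-- For every delay `τ ≥ 0`, the characteristic equation at the CTL-activated
infection equilibrium `E₂` has no pure imaginary roots. -/
theorem no_pure_imaginary_roots_E2
    (lam m r u s k v a n : ℝ)
    (hlam : 0 < lam) (hm : 0 < m) (hr : 0 < r) (hu : 0 < u) (hs : 0 < s)
    (hk : 0 < k) (hv : 0 < v) (ha : 0 < a) (hn : 0 < n)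
    (hR : a * k * lam * r > a * m * u * v + k * n * r * u)
    (Zbar Vbar Tbar : ℝ)
    (hZ : Zbar = a * lam * v / (a * m * v + k * n * r))
    (hV : Vbar = k * n / (a * v))
    (hT : Tbar = (a * k * lam * r - a * m * u * v - k * n * r * u)
                   / (a * m * v * s + k * n * r * s)) :
    ∀ τ : ℝ, 0 ≤ τ → ∀ w : ℝ,
      (w * Complex.I + (m : ℂ) + (Vbar : ℂ) * r) * ((v : ℂ) + w * Complex.I) *
          ((Tbar : ℂ) * n * s
            + w * Complex.I * ((u : ℂ) + w * Complex.I + (Tbar : ℂ) * s))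
        ≠ (w * Complex.I + (m : ℂ)) * (v : ℂ) * ((Zbar : ℂ) * k * r / v)
            * (w * Complex.I) * Complex.exp (-(τ : ℂ) * (w * Complex.I)) :=
  no_pure_imaginary_roots_E2_general lam m r u s k v a n hm hr hu hs hk hv ha hn hR Zbar Vbar Tbar
    hZ hV hT
end
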